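/- A function f : 2^ω → 2 satisfies 'f^{-1}(1) is a filter containing 1⃗ but not 0⃗' if and only if for every sequence of inputs (x⃗_q)_{q<ω} in 2^ω there exists an ω-ary h ∈ ⟨liminf⟩ with h(x⃗_q) = f(x⃗_q) for all q. In other words, the ω-ary Boolean functions whose 1-preimage is a proper filter containing 1⃗ form exactly the countable closure of ⟨liminf⟩ at arity ω. -/
import Mathlib


open scoped Classical

/-- An arity: `some n` is the finite arity `n ≥ 1`; `none` is the countably infinite arity ω. -/
abbrev Arity := Option ℕ+

/-- The index set of an arity. -/
abbrev Idx : Arity → Type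
  | some n => Fin (n : ℕ)
  | none => ℕ

/-- A Boolean function of some arity `1 ≤ n ≤ ω`.  The input space `Idx a → Bool`
carries the product topology (with `Bool` discrete), the product σ-algebra (= Borel),
and the coordinatewise partial order. -/
abbrev BFun : Type := Σ a : Arity, (Idx a → Bool) → Bool

/-- A clone: a set of Boolean functions of arities `1 ≤ n ≤ ω` containing all projections
and closed under composition. -/
structure IsClone (F : Set BFun) : Prop where
  proj : ∀ (a : Arity) (i : Idx a), (⟨a, fun x => x i⟩ : BFun) ∈ F
  comp : ∀ (a b : Arity) (g : (Idx a → Bool) → Bool) (f : Idx a → (Idx b → Bool) → Bool),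
      (⟨a, g⟩ : BFun) ∈ F → (∀ i, (⟨b, f i⟩ : BFun) ∈ F) →
      (⟨b, fun x => g fun i => f i x⟩ : BFun) ∈ F

/-- The clone generated by a set of Boolean functions. -/
def cloneGen (G : Set BFun) : Set BFun := ⋂₀ {F : Set BFun | IsClone F ∧ G ⊆ F}

/-- `f` has finite arity. -/
def finitary (f : BFun) : Prop := f.1 ≠ none

/-- `f` is Borel: the preimage of `1` is a Borel set. -/
def IsBorelFun (f : BFun) : Prop := MeasurableSet {x | f.2 x = true}

/-- `f` is continuous (equivalently, depends on only finitely many coordinates). -/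
def IsContFun (f : BFun) : Prop := Continuous f.2

/-- `f(0⃗) = 0`. -/
def PresBot (f : BFun) : Prop := f.2 (fun _ => false) = false

/-- `f(1⃗) = 1`. -/
def PresTop (f : BFun) : Prop := f.2 (fun _ => true) = true

/-- `f` vanishes on a neighborhood of `0⃗`, i.e. `0⃗` is not in the closure of `f⁻¹(1)`. -/
def VanishNearBot (f : BFun) : Prop := (fun _ => false) ∉ closure {x | f.2 x = true}

/-- `f` equals `1` on a neighborhood of `1⃗`, i.e. `1⃗` is not in the closure of `f⁻¹(0)`. -/
def OneNearTop (f : BFun) : Prop := (fun _ => true) ∉ closure {x | f.2 x = false}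

/-- Countably infinite disjunction `⋁ : 2^ω → 2`. -/
noncomputable def bigOr : (ℕ → Bool) → Bool := fun x => decide (∃ i, x i = true)

/-- Countably infinite conjunction `⋀ : 2^ω → 2`. -/
noncomputable def bigAnd : (ℕ → Bool) → Bool := fun x => decide (∀ i, x i = true)

/-- `liminf : 2^ω → 2`, equal to `1` iff all but finitely many bits are `1`. -/
noncomputable def liminfF : (ℕ → Bool) → Bool := fun x => decide (∃ N, ∀ j, N ≤ j → x j = true)

/-- `A ⊆ 2^ι` is a filter: upward-closed and closed under coordinatewise binary meets. -/
def IsFilterSet {ι : Type} (A : Set (ι → Bool)) : Prop :=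
  (∀ x y : ι → Bool, x ≤ y → x ∈ A → y ∈ A) ∧
  (∀ x y : ι → Bool, x ∈ A → y ∈ A → (fun i => x i && y i) ∈ A)

-- AUX START
lemma boolLe_of_imp {m y : ℕ → Bool} (h : ∀ i, m i = true → y i = true) : m ≤ y := by
  intro i
  cases hmi : m i with
  | false => exact Bool.false_le _
  | true => rw [h i hmi]

lemma bool_le_true {a b : Bool} (h : a ≤ b) (ha : a = true) : b = true := by
  subst ha; cases b
  · exact absurd h (by decide)
  · rfl

lemma bool_imp_le {a b : Bool} (h : a = true → b = true) : a ≤ b := by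
  cases ha : a
  · exact Bool.false_le _
  · rw [h ha]

def GoodFun (f : BFun) : Prop :=
  IsFilterSet {x | f.2 x = true} ∧ f.2 (fun _ => true) = true ∧ f.2 (fun _ => false) = false

lemma mem_cloneGen {G : Set BFun} {f : BFun} :
    f ∈ cloneGen G ↔ ∀ F : Set BFun, IsClone F → G ⊆ F → f ∈ F := by
  unfold cloneGen
  rw [Set.mem_sInter]
  simp only [Set.mem_setOf_eq, and_imp]

lemma isClone_cloneGen (G : Set BFun) : IsClone (cloneGen G) := by
  constructor
  · intro a i
    rw [mem_cloneGen]; intro F hF _; exact hF.proj a i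
  · intro a b g fι hg hfι
    rw [mem_cloneGen] at *
    intro F hF hGF
    exact hF.comp a b g fι (hg F hF hGF) (fun i => (mem_cloneGen.mp (hfι i)) F hF hGF)

lemma isClone_good : IsClone {f | GoodFun f} := by
  constructor
  · intro a i
    refine ⟨⟨?_, ?_⟩, rfl, rfl⟩
    · intro x y hxy hx
      exact bool_le_true (hxy i) hx
    · intro x y hx hy
      simp only [Set.mem_setOf_eq] at *
      simp [hx, hy]
  · intro a b g fι hg hfι
    refine ⟨⟨?_, ?_⟩, ?_, ?_⟩
    · intro x y hxy hx
      refine hg.1.1 _ _ ?_ hx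
      intro i
      exact bool_imp_le fun hfix => (hfι i).1.1 x y hxy hfix
    · intro x y hx hy
      have hz := hg.1.2 _ _ hx hy
      refine hg.1.1 _ _ ?_ hz
      intro i
      exact bool_imp_le fun hfix =>
        (hfι i).1.2 x y (Bool.and_eq_true_iff.mp hfix).1 (Bool.and_eq_true_iff.mp hfix).2
    · show g (fun i => fι i (fun _ => true)) = true
      have : (fun i => fι i (fun _ => true)) = (fun _ => true) := funext fun i => (hfι i).2.1
      rw [this]; exact hg.2.1
    · show g (fun i => fι i (fun _ => false)) = false
      have : (fun i => fι i (fun _ => false)) = (fun _ => false) := funext fun i => (hfι i).2.2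
      rw [this]; exact hg.2.2

lemma liminfF_eq_true_iff (x : ℕ → Bool) :
    liminfF x = true ↔ ∃ N, ∀ j, N ≤ j → x j = true := by
  simp [liminfF]

lemma good_liminf : GoodFun ⟨none, liminfF⟩ := by
  refine ⟨⟨?_, ?_⟩, ?_, ?_⟩
  · intro x y hxy hx
    simp only [Set.mem_setOf_eq, liminfF_eq_true_iff] at *
    obtain ⟨N, hN⟩ := hx
    exact ⟨N, fun j hj => bool_le_true (hxy j) (hN j hj)⟩
  · intro x y hx hy
    simp only [Set.mem_setOf_eq, liminfF_eq_true_iff] at *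
    obtain ⟨N, hN⟩ := hx
    obtain ⟨M, hM⟩ := hy
    exact ⟨max N M, fun j hj => by
      simp [hN j (le_trans (le_max_left N M) hj), hM j (le_trans (le_max_right N M) hj)]⟩
  · show liminfF (fun _ => true) = true
    rw [liminfF_eq_true_iff]
    exact ⟨0, fun j _ => rfl⟩
  · show liminfF (fun _ => false) = false
    simp only [liminfF, decide_eq_false_iff_not]
    rintro ⟨N, hN⟩
    exact Bool.false_ne_true (hN N le_rfl)

lemma good_of_mem {h : BFun} (hh : h ∈ cloneGen {(⟨none, liminfF⟩ : BFun)}) : GoodFun h :=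
  mem_cloneGen.mp hh {f | GoodFun f} isClone_good
    (Set.singleton_subset_iff.mpr good_liminf)

/-- countable conjunction over a nonempty set of coordinates is in the clone -/
lemma meet_mem (S : Set ℕ) (i0 : ℕ) (h0 : i0 ∈ S) :
    (⟨none, fun y => decide (∀ i ∈ S, y i = true)⟩ : BFun) ∈
      cloneGen {(⟨none, liminfF⟩ : BFun)} := by
  have key : (fun y : ℕ → Bool => decide (∀ i ∈ S, y i = true))
      = fun y => liminfF (fun k => y (if (Nat.unpair k).1 ∈ S then (Nat.unpair k).1 else i0)) := by
    funext y
    rw [liminfF, decide_eq_decide]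
    constructor
    · intro h
      refine ⟨0, fun j _ => ?_⟩
      by_cases hs : (Nat.unpair j).1 ∈ S
      · simp only [hs, if_pos]; exact h _ hs
      · simp only [hs, if_neg, if_false]; exact h _ h0
    · rintro ⟨N, hN⟩ i hi
      have h := hN (Nat.pair i N) (Nat.right_le_pair i N)
      simpa [Nat.unpair_pair, hi] using h
  rw [key]
  exact (isClone_cloneGen _).comp none none liminfF
    (fun k y => y (if (Nat.unpair k).1 ∈ S then (Nat.unpair k).1 else i0))
    (mem_cloneGen.mpr fun F _ hGF => hGF rfl)
    (fun k => (isClone_cloneGen _).proj none _)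

noncomputable def mSeq (f : (ℕ → Bool) → Bool) (x : ℕ → ℕ → Bool) : ℕ → ℕ → Bool
  | 0 => fun i => !(f (x 0)) || x 0 i
  | (j+1) => fun i => mSeq f x j i && (!(f (x (j+1))) || x (j+1) i)

lemma factor_mem {f : (ℕ → Bool) → Bool}
    (hfil : IsFilterSet {x | f x = true}) (htop : f (fun _ => true) = true)
    (x : ℕ → ℕ → Bool) (q : ℕ) :
    f (fun i => !(f (x q)) || x q i) = true := by
  rcases Bool.eq_false_or_eq_true (f (x q)) with hq | hq
  · have : (fun i => !(f (x q)) || x q i) = x q := funext fun i => by simp [hq]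
    rw [this]; exact hq
  · have : (fun i => !(f (x q)) || x q i) = (fun _ => true) := funext fun i => by simp [hq]
    rw [this]; exact htop

lemma mSeq_mem {f : (ℕ → Bool) → Bool}
    (hfil : IsFilterSet {x | f x = true}) (htop : f (fun _ => true) = true)
    (x : ℕ → ℕ → Bool) (j : ℕ) : f (mSeq f x j) = true := by
  induction j with
  | zero => exact factor_mem hfil htop x 0
  | succ j ih =>
    exact hfil.2 (mSeq f x j) (fun i => !(f (x (j+1))) || x (j+1) i) ih
      (factor_mem hfil htop x (j+1))

lemma mSeq_factor {f : (ℕ → Bool) → Bool} {x : ℕ → ℕ → Bool} {j q i : ℕ}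
    (hq : q ≤ j) (hm : mSeq f x j i = true) : (!(f (x q)) || x q i) = true := by
  induction j with
  | zero =>
    have : q = 0 := Nat.le_zero.mp hq
    subst this; exact hm
  | succ j ih =>
    obtain ⟨h1, h2⟩ := Bool.and_eq_true_iff.mp hm
    rcases Nat.lt_or_ge q (j+1) with h | h
    · exact ih (Nat.lt_succ_iff.mp h) h1
    · have : q = j + 1 := le_antisymm hq h
      subst this; exact h2
-- AUX END

/-- A function `f : 2^ω → 2` is the indicator of a proper filter containing `1⃗` iff for
every countable family of inputs there is an ω-ary member of `⟨liminf⟩` agreeing with `f`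
on them: the ω-ary functions whose `1`-preimage is a filter containing `1⃗` but not `0⃗`
form exactly the countable closure of `⟨liminf⟩` at arity ω. -/
theorem filter_iff_ctblClosure_liminf (f : (ℕ → Bool) → Bool) :
    (IsFilterSet {x | f x = true} ∧ f (fun _ => true) = true ∧ f (fun _ => false) = false)
    ↔
    (∀ x : ℕ → ℕ → Bool, ∃ h : (ℕ → Bool) → Bool,
      (⟨none, h⟩ : BFun) ∈ cloneGen {(⟨none, liminfF⟩ : BFun)} ∧
      ∀ q, h (x q) = f (x q)) := by
  constructor
  · rintro ⟨hfil, htop, hbot⟩ x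
    -- each mSeq is not identically false
    have hne : ∀ j, ∃ i, mSeq f x j i = true := by
      intro j
      by_contra hc
      push_neg at hc
      have : mSeq f x j = fun _ => false := funext fun i => by
        cases hmi : mSeq f x j i
        · rfl
        · exact absurd hmi (hc i)
      have h1 := mSeq_mem hfil htop x j
      rw [this, hbot] at h1
      exact Bool.false_ne_true h1
    choose i0 hi0 using hne
    refine ⟨fun y => liminfF (fun j =>
        decide (∀ i ∈ {i | mSeq f x j i = true}, y i = true)), ?_, ?_⟩
    · exact (isClone_cloneGen _).comp none none liminfF
        (fun j y => decide (∀ i ∈ {i | mSeq f x j i = true}, y i = true))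
        (mem_cloneGen.mpr fun F _ hGF => hGF rfl)
        (fun j => meet_mem _ (i0 j) (hi0 j))
    · intro q
      cases hq : f (x q) with
      | true =>
        rw [liminfF_eq_true_iff]
        refine ⟨q, fun j hj => ?_⟩
        rw [decide_eq_true_eq]
        intro i hi
        have h2 := mSeq_factor hj hi
        rwa [hq, Bool.not_true, Bool.false_or] at h2
      | false =>
        rw [Bool.eq_false_iff]
        intro hcon
        rw [liminfF_eq_true_iff] at hcon
        obtain ⟨N, hN⟩ := hcon
        have h3 := hN N le_rfl
        rw [decide_eq_true_eq] at h3
        have hle : mSeq f x N ≤ x q := boolLe_of_imp fun i hi => h3 i hi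
        have := hfil.1 (mSeq f x N) (x q) hle (mSeq_mem hfil htop x N)
        rw [Set.mem_setOf_eq, hq] at this
        exact Bool.false_ne_true this
  · intro H
    refine ⟨⟨?_, ?_⟩, ?_, ?_⟩
    · -- upward closed
      intro u v huv hu
      obtain ⟨h, hh, hag⟩ := H (fun q => if q = 0 then u else v)
      have g := good_of_mem hh
      have e0 : h u = f u := by simpa using hag 0
      have e1 : h v = f v := by simpa using hag 1
      have h0 : h u = true := by rw [e0]; exact hu
      have hv : h v = true := g.1.1 u v huv h0
      show f v = true
      rw [← e1]; exact hv
    · -- meets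
      intro u v hu hv
      obtain ⟨h, hh, hag⟩ := H (fun q => if q = 0 then u else if q = 1 then v else fun i => u i && v i)
      have g := good_of_mem hh
      have e0 : h u = f u := by simpa using hag 0
      have e1 : h v = f v := by simpa using hag 1
      have e2 : h (fun i => u i && v i) = f (fun i => u i && v i) := by simpa using hag 2
      have h0 : h u = true := by rw [e0]; exact hu
      have h1 : h v = true := by rw [e1]; exact hv
      have hw : h (fun i => u i && v i) = true := g.1.2 u v h0 h1
      show f (fun i => u i && v i) = true
      rw [← e2]; exact hw
    · obtain ⟨h, hh, hag⟩ := H (fun _ _ => true)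
      have g := good_of_mem hh
      exact (hag 0).symm.trans g.2.1
    · obtain ⟨h, hh, hag⟩ := H (fun _ _ => false)
      have g := good_of_mem hh
      exact (hag 0).symm.trans g.2.2
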